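/- Let (X,d) be a complete metric space, n ≥ 1 a fixed integer, and for each k ∈ ℕ let {f_{i,k} : i = 1,…,n} be contractions on X. Suppose there exists a nonempty compact set 𝓘 ⊆ X with f_{i,k}(𝓘) ⊆ 𝓘 for all i and k, and that for each i, the sequence {f_{i,k}}_{k∈ℕ} converges uniformly on 𝓘 to a map f_i as k → ∞, where each f_i : X → X is a contraction with contraction factor c_i < 1. Let A be the unique attractor of the contractive IFS (X, {f_1,…,f_n}), i.e. the unique nonempty compact set with A = ⋃_{i=1}^n f_i(A). Then for every nonempty compact set A_0 ⊆ 𝓘, the forward trajectories Φ_k(A_0) := 𝓕_k ∘ 𝓕_{k-1} ∘ ⋯ ∘ 𝓕_1 (A_0) converge to A in the Hausdorff distance as k → ∞, where 𝓕_k(S) := ⋃_{i=1}^n f_{i,k}(S). -/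

import Mathlib

open Filter Topology

/-- Forward trajectory of a sequence of self-maps:
`forwardTraj T k = T (k-1) ∘ ⋯ ∘ T 1 ∘ T 0`. -/
def forwardTraj {α : Type*} (T : ℕ → α → α) : ℕ → α → α
  | 0 => id
  | k + 1 => fun a => T k (forwardTraj T k a)

/-!
Let `d k` be the Hausdorff distance from `Φ k` to `A`, and `C = max cᵢ < 1`. Since `A` is a fixed
point of the limit Hutchinson map `𝓖`, the triangle inequality through `𝓖 (Φ k)` gives
`d (k + 1) ≤ h(𝓕ₖ (Φ k), 𝓖 (Φ k)) + h(𝓖 (Φ k), 𝓖 A) ≤ εₖ + C * d k`, where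
`εₖ = maxᵢ sup_𝓘 d(f_{i,k}, gᵢ) → 0` because `Φ k` never leaves `𝓘`. As `d` is bounded by the
diameter of `𝓘 ∪ A`, its limsup `L` is finite and satisfies `L ≤ C * L`, so `L = 0`.
-/

open Set Metric
open scoped NNReal ENNReal

theorem forwardTraj_induction {α : Type*} {T : ℕ → α → α} {p : α → Prop}
    (hT : ∀ k a, p a → p (T k a)) {a : α} (ha : p a) : ∀ k, p (forwardTraj T k a)
  | 0 => ha
  | k + 1 => hT k _ (forwardTraj_induction hT ha k)

theorem ENNReal.tendsto_nhds_zero_of_eventually_le_mul_add {u : ℕ → ℝ≥0∞} {C M : ℝ≥0∞}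
    (hC : C < 1) (hM : M ≠ ∞) (hu : ∀ k, u k ≤ M)
    (hstep : ∀ ε > 0, ∀ᶠ k in atTop, u (k + 1) ≤ C * u k + ε) :
    Tendsto u atTop (𝓝 0) := by
  set L := limsup u atTop
  have hL_ne_top : L ≠ ∞ :=
    ne_top_of_le_ne_top hM (limsup_le_of_le (by isBoundedDefault) (.of_forall hu))
  have hL : L ≤ C * L := ENNReal.le_of_forall_pos_le_add fun ε hε _ => calc
    L = limsup (fun k => u (k + 1)) atTop := (limsup_nat_add u 1).symm
    _ ≤ limsup (fun k => C * u k + ε) atTop := limsup_le_limsup (hstep ε (by simpa using hε))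
    _ = C * L + ε := by
      rw [limsup_add_const _ _ _ (by isBoundedDefault) (by isBoundedDefault),
        ENNReal.limsup_const_mul_of_ne_top hC.ne_top]
  have hL_eq_zero : L = 0 := by
    by_contra hL_ne_zero
    have : C * L < L := by simpa using ENNReal.mul_lt_mul_left hL_ne_zero hL_ne_top hC
    exact this.not_ge hL
  exact tendsto_of_le_liminf_of_limsup_le bot_le hL_eq_zero.le

section

variable {α β ι : Type*}

def hutchinson (F : ι → α → β) (S : Set α) : Set β :=
  ⋃ i, F i '' S

section

variable {F G : ι → α → β} {S : Set α}

theorem hutchinson_subset {s : Set α} {t : Set β} (hF : ∀ i, MapsTo (F i) s t) (hS : S ⊆ s) :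
    hutchinson F S ⊆ t :=
  iUnion_subset fun i => ((hF i).mono_left hS).image_subset

theorem Set.Nonempty.hutchinson [Nonempty ι] (hS : S.Nonempty) : (hutchinson F S).Nonempty := by
  simpa [_root_.hutchinson] using hS

variable [PseudoEMetricSpace β]

theorem hausdorffEDist_image_image_le {f g : α → β} {s : Set α} {r : ℝ≥0∞}
    (h : ∀ x ∈ s, edist (f x) (g x) ≤ r) : hausdorffEDist (f '' s) (g '' s) ≤ r :=
  hausdorffEDist_le_of_mem_edist
    (forall_mem_image.2 fun x hx => ⟨g x, mem_image_of_mem g hx, h x hx⟩)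
    (forall_mem_image.2 fun x hx => ⟨f x, mem_image_of_mem f hx, edist_comm (g x) (f x) ▸ h x hx⟩)

theorem hausdorffEDist_hutchinson_le_of_edist_le {r : ℝ≥0∞}
    (h : ∀ i, ∀ x ∈ S, edist (F i x) (G i x) ≤ r) :
    hausdorffEDist (hutchinson F S) (hutchinson G S) ≤ r :=
  hausdorffEDist_iUnion_le.trans (iSup_le fun i => hausdorffEDist_image_image_le (h i))

variable [PseudoEMetricSpace α]

theorem LipschitzWith.infEDist_image_le {K : ℝ≥0} {f : α → β} (hf : LipschitzWith K f) (x : α)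
    {t : Set α} (ht : t.Nonempty) : infEDist (f x) (f '' t) ≤ K * infEDist x t := by
  have : Nonempty t := ht.to_subtype
  rw [show infEDist x t = ⨅ y : t, edist x y from iInf_subtype', ENNReal.mul_iInf (by simp)]
  exact le_iInf fun y => (infEDist_le_edist_of_mem (mem_image_of_mem f y.2)).trans (hf x y)

theorem LipschitzWith.hausdorffEDist_image_le {K : ℝ≥0} {f : α → β} (hf : LipschitzWith K f)
    {s t : Set α} (hs : s.Nonempty) (ht : t.Nonempty) :
    hausdorffEDist (f '' s) (f '' t) ≤ K * hausdorffEDist s t := by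
  refine hausdorffEDist_le_of_infEDist (forall_mem_image.2 fun x hx => ?_)
    (forall_mem_image.2 fun x hx => ?_)
  · exact (hf.infEDist_image_le x ht).trans
      (by gcongr; exact infEDist_le_hausdorffEDist_of_mem hx)
  · rw [hausdorffEDist_comm]
    exact (hf.infEDist_image_le x hs).trans
      (by gcongr; exact infEDist_le_hausdorffEDist_of_mem hx)

theorem hausdorffEDist_hutchinson_le_mul {K : ℝ≥0} (hF : ∀ i, LipschitzWith K (F i))
    {T : Set α} (hS : S.Nonempty) (hT : T.Nonempty) :
    hausdorffEDist (hutchinson F S) (hutchinson F T) ≤ K * hausdorffEDist S T :=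
  hausdorffEDist_iUnion_le.trans (iSup_le fun i => (hF i).hausdorffEDist_image_le hS hT)

end

theorem hausdorffEDist_hutchinson_le_mul_add [PseudoEMetricSpace α] {F G : ι → α → α}
    {S A : Set α} {K : ℝ≥0} {r : ℝ≥0∞} (hA : A = hutchinson G A)
    (hG : ∀ i, LipschitzWith K (G i)) (hS : S.Nonempty)
    (hA_ne : A.Nonempty) (hFG : ∀ i, ∀ x ∈ S, edist (F i x) (G i x) ≤ r) :
    hausdorffEDist (hutchinson F S) A ≤ K * hausdorffEDist S A + r := calc
  hausdorffEDist (hutchinson F S) A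
      ≤ hausdorffEDist (hutchinson F S) (hutchinson G S) +
        hausdorffEDist (hutchinson G S) (hutchinson G A) := by
    nth_rw 1 [hA]
    exact hausdorffEDist_triangle
  _ ≤ r + K * hausdorffEDist S A := by
    gcongr
    exacts [hausdorffEDist_hutchinson_le_of_edist_le hFG,
      hausdorffEDist_hutchinson_le_mul hG hS hA_ne]
  _ = K * hausdorffEDist S A + r := add_comm _ _

end

theorem forward_hutchinson_tendsto_attractor_general {X : Type*} [MetricSpace X]
    (n : ℕ) (hn : 0 < n) (f : ℕ → Fin n → X → X)
    (I : Set X) (hcpt : IsCompact I)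
    (hinv : ∀ k i, Set.MapsTo (f k i) I I)
    (g : Fin n → X → X) (c : Fin n → NNReal) (hc : ∀ i, c i < 1)
    (hg : ∀ i, LipschitzWith (c i) (g i))
    (hconv : ∀ i, TendstoUniformlyOn (fun k => f k i) (g i) atTop I)
    (A : Set X) (hA : A.Nonempty) (hAc : IsCompact A) (hAfix : A = ⋃ i, g i '' A) :
    ∀ A₀ : Set X, A₀ ⊆ I → A₀.Nonempty → IsCompact A₀ →
      Tendsto (fun k => Metric.hausdorffDist
        (forwardTraj (fun k S => ⋃ i, f k i '' S) k A₀) A) atTop (𝓝 0) := by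
  intro A₀ hA₀I hA₀ _
  have : Nonempty (Fin n) := ⟨⟨0, hn⟩⟩
  obtain ⟨C, hC, hgC⟩ : ∃ C : ℝ≥0, C < 1 ∧ ∀ i, LipschitzWith C (g i) :=
    ⟨Finset.univ.sup c, (Finset.sup_lt_iff zero_lt_one).2 fun i _ => hc i,
      fun i => (hg i).weaken (Finset.le_sup (Finset.mem_univ i))⟩
  set Φ := fun k => forwardTraj (fun k => hutchinson (f k)) k A₀
  have hΦ : ∀ k, Φ k ⊆ I ∧ (Φ k).Nonempty :=
    forwardTraj_induction (p := fun S => S ⊆ I ∧ S.Nonempty)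
      (fun k _ hS => ⟨hutchinson_subset (hinv k) hS.1, hS.2.hutchinson⟩) ⟨hA₀I, hA₀⟩
  have hbdd : ∀ k, hausdorffEDist (Φ k) A ≤ ediam (I ∪ A) := fun k =>
    (hausdorffEDist_le_ediam (hΦ k).2 hA).trans (ediam_mono (union_subset_union_left A (hΦ k).1))
  have hstep : ∀ ε > 0, ∀ᶠ k in atTop,
      hausdorffEDist (Φ (k + 1)) A ≤ C * hausdorffEDist (Φ k) A + ε := fun ε hε => by
    filter_upwards [eventually_all.2 fun i => EMetric.tendstoUniformlyOn_iff.1 (hconv i) ε hε]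
      with k hk
    exact hausdorffEDist_hutchinson_le_mul_add hAfix hgC (hΦ k).2 hA
      fun i x hx => (edist_comm _ _).trans_le (hk i x ((hΦ k).1 hx)).le
  exact (ENNReal.tendsto_toReal ENNReal.zero_ne_top).comp
    (ENNReal.tendsto_nhds_zero_of_eventually_le_mul_add (by exact_mod_cast hC)
      (hcpt.union hAc).isBounded.ediam_ne_top hbdd hstep)

/-- If the contractions `f_{i,k}` (with a fixed number `n` of maps) leave a
nonempty compact set `𝓘` invariant and converge uniformly on `𝓘` to contractions `f_i` as
`k → ∞`, then the forward trajectories of the Hutchinson maps of the families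
`{f_{i,k} : i}` converge in the Hausdorff distance, for every nonempty compact `A₀ ⊆ 𝓘`,
to the attractor `A` of the limit IFS `{f_1, …, f_n}`. -/
theorem forward_hutchinson_tendsto_attractor {X : Type*} [MetricSpace X] [CompleteSpace X]
    (n : ℕ) (hn : 0 < n) (f : ℕ → Fin n → X → X)
    (hf : ∀ k i, ∃ c : NNReal, c < 1 ∧ LipschitzWith c (f k i))
    (I : Set X) (hne : I.Nonempty) (hcpt : IsCompact I)
    (hinv : ∀ k i, Set.MapsTo (f k i) I I)
    (g : Fin n → X → X) (c : Fin n → NNReal) (hc : ∀ i, c i < 1)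
    (hg : ∀ i, LipschitzWith (c i) (g i))
    (hconv : ∀ i, TendstoUniformlyOn (fun k => f k i) (g i) atTop I)
    (A : Set X) (hA : A.Nonempty) (hAc : IsCompact A) (hAfix : A = ⋃ i, g i '' A) :
    ∀ A₀ : Set X, A₀ ⊆ I → A₀.Nonempty → IsCompact A₀ →
      Tendsto (fun k => Metric.hausdorffDist
        (forwardTraj (fun k S => ⋃ i, f k i '' S) k A₀) A) atTop (𝓝 0) :=
  forward_hutchinson_tendsto_attractor_general n hn f I hcpt hinv g c hc hg hconv A hA hAc hAfix
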